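/- arXiv:2404.19537 — 2 statements merged into one kernel-verified Lean document; each statement's English description precedes it below -/
import Mathlib

section
/- Let G be an r-regular non-complete connected graph on p vertices with adjacency eigenvalues r, λ₂, ..., λ_p. Then the eccentricity spectrum of G ∨ G consists of 2(p−r−1) with multiplicity 2 and −2(λ_i + 1) with multiplicity 2 for each i = 2, ..., p. -/
open SimpleGraph Matrix Finset

attribute [local instance] Fintype.ofFinite Classical.propDecidable

noncomputable section

/-- Eccentricity of a vertex: maximum distance to any vertex. -/
def ecc {V : Type*} [Fintype V] (G : SimpleGraph V) (v : V) : ℕ :=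
  Finset.univ.sup (fun w => G.dist v w)

/-- Diameter: maximum eccentricity. -/
def gdiam {V : Type*} [Fintype V] (G : SimpleGraph V) : ℕ :=
  Finset.univ.sup (fun v => ecc G v)

/-- The eccentricity matrix. -/
def eccMatrix {V : Type*} [Fintype V] (G : SimpleGraph V) : Matrix V V ℝ :=
  fun u v => if G.dist u v = min (ecc G u) (ecc G v) then (G.dist u v : ℝ) else 0

/-- Join of two graphs. -/
def joinGraph {V₁ V₂ : Type*} (G₁ : SimpleGraph V₁) (G₂ : SimpleGraph V₂) :
    SimpleGraph (V₁ ⊕ V₂) :=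
  SimpleGraph.fromRel (fun x y =>
    match x, y with
    | Sum.inl a, Sum.inl b => G₁.Adj a b
    | Sum.inr a, Sum.inr b => G₂.Adj a b
    | Sum.inl _, Sum.inr _ => True
    | Sum.inr _, Sum.inl _ => False)

/-- Disjoint union of two graphs. -/
def disjUnion {V₁ V₂ : Type*} (G₁ : SimpleGraph V₁) (G₂ : SimpleGraph V₂) :
    SimpleGraph (V₁ ⊕ V₂) :=
  SimpleGraph.fromRel (fun x y =>
    match x, y with
    | Sum.inl a, Sum.inl b => G₁.Adj a b
    | Sum.inr a, Sum.inr b => G₂.Adj a b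
    | _, _ => False)

/-- Subdivision-vertex join `G₁ ∨̇ G₂`: take the subdivision of `G₁` (original vertices
`V₁`, one new vertex for every edge) and join every original vertex of `G₁` to every
vertex of `G₂`. -/
def subVertexJoin {V₁ V₂ : Type*} (G₁ : SimpleGraph V₁) (G₂ : SimpleGraph V₂) :
    SimpleGraph ((V₁ ⊕ G₁.edgeSet) ⊕ V₂) :=
  SimpleGraph.fromRel (fun x y =>
    match x, y with
    | Sum.inl (Sum.inl v), Sum.inl (Sum.inr e) => v ∈ (e : Sym2 V₁)
    | Sum.inl (Sum.inl _), Sum.inr _ => True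
    | Sum.inr a, Sum.inr b => G₂.Adj a b
    | _, _ => False)

/-- Subdivision-edge join `G₁ ⊻ G₂`: take the subdivision of `G₁` and join every
subdivision (inserted) vertex of `G₁` to every vertex of `G₂`. -/
def subEdgeJoin {V₁ V₂ : Type*} (G₁ : SimpleGraph V₁) (G₂ : SimpleGraph V₂) :
    SimpleGraph ((V₁ ⊕ G₁.edgeSet) ⊕ V₂) :=
  SimpleGraph.fromRel (fun x y =>
    match x, y with
    | Sum.inl (Sum.inl v), Sum.inl (Sum.inr e) => v ∈ (e : Sym2 V₁)
    | Sum.inl (Sum.inr _), Sum.inr _ => True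
    | Sum.inr a, Sum.inr b => G₂.Adj a b
    | _, _ => False)

/-- Line graph: vertices are edges of `G`, adjacent iff they share an endpoint. -/
def lineG {V : Type*} (G : SimpleGraph V) : SimpleGraph G.edgeSet :=
  SimpleGraph.fromRel (fun e f => ∃ v, v ∈ (e : Sym2 V) ∧ v ∈ (f : Sym2 V))

/-- Incidence matrix of a graph. -/
def incMat {V : Type*} [Fintype V] (G : SimpleGraph V) : Matrix V G.edgeSet ℝ :=
  fun v e => if v ∈ (e : Sym2 V) then 1 else 0

/-- All-ones matrix. -/
def Jmat (m n : Type*) : Matrix m n ℝ := Matrix.of (fun _ _ => (1 : ℝ))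

/-- A symmetric matrix is irreducible iff it is not permutation-similar to a
nontrivial block upper-triangular matrix, i.e. there is no nontrivial vertex split
with all cross entries zero. -/
def MatIrreducible {n : Type*} (M : Matrix n n ℝ) : Prop :=
  ∀ S : Set n, S.Nonempty → Sᶜ.Nonempty → ∃ u ∈ S, ∃ v ∈ Sᶜ, M u v ≠ 0

/-- `μ` is an eigenvalue of `M`. -/
def IsEigenvalue {n : Type*} [Fintype n] (M : Matrix n n ℝ) (μ : ℝ) : Prop :=
  ∃ v : n → ℝ, v ≠ 0 ∧ M.mulVec v = μ • v

/-- Eigenspace of `M` for `μ`. -/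
def eigSpace {n : Type*} [Fintype n] (M : Matrix n n ℝ) (μ : ℝ) :
    Submodule ℝ (n → ℝ) :=
  LinearMap.ker (M.mulVecLin - μ • LinearMap.id)

/-- Eccentricity energy: sum of absolute values of the eccentricity eigenvalues. -/
def eccEnergy {V : Type*} [Fintype V] (G : SimpleGraph V) : ℝ :=
  ((eccMatrix G).charpoly.roots.map (fun x => |x|)).sum

/-- Eccentricity Wiener index: half the sum of the entries of the eccentricity matrix. -/
def eccWiener {V : Type*} [Fintype V] (G : SimpleGraph V) : ℝ :=
  (∑ u, ∑ v, eccMatrix G u v) / 2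

end

/-!
In `G ∨ G` two vertices in different copies are adjacent, and a regular non-complete graph has
no vertex adjacent to all others, so every vertex has eccentricity `2` and the eccentricity
matrix is block diagonal with two copies of `2 A(Gᶜ) = 2J - 2I - 2A(G)`. Since `A(G)` has
constant row sums `r`, this is a rank-one perturbation `2J` of `-2I - 2A(G)`, whose spectrum
comes from that of `A(G)` by the spectral theorem. By the matrix determinant lemma the
perturbation moves the eigenvalue `-2(r + 1)` (eigenvector `𝟙`) to `2(p - r - 1)` and leaves
the other eigenvalues in place.
-/

namespace Matrix

open Polynomial

variable {K : Type*} [Field K] {n : Type*} [Fintype n] [DecidableEq n]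

theorem det_add_of_mulVec_one_eq_smul {B : Matrix n n K} (hB : IsUnit B.det) {σ : K}
    (hσ : σ ≠ 0) (hB1 : B *ᵥ 1 = σ • 1) (c : K) :
    (B + of fun _ _ => c).det * σ = B.det * (σ + c * Fintype.card n) := by
  have hinv : B⁻¹ *ᵥ 1 = σ⁻¹ • 1 := by
    rw [← inv_smul_smul₀ hσ (B⁻¹ *ᵥ 1), ← mulVec_smul, ← hB1, mulVec_mulVec,
      nonsing_inv_mul B hB, one_mulVec]
  have hJ : (of fun _ _ => c : Matrix n n K) =
      (replicateCol Unit (c • 1) : Matrix n Unit K) *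
        (replicateRow Unit 1 : Matrix Unit n K) := by
    ext; simp [Matrix.mul_apply]
  rw [hJ, det_add_replicateCol_mul_replicateRow (ι := Unit) hB, Matrix.mul_assoc,
    ← replicateCol_mulVec, mulVec_smul, hinv]
  simp [dotProduct]
  field_simp

-- Over `K[X]` the characteristic matrix of `N` need not be invertible; over the fraction
-- field it is, so the matrix determinant lemma applies there.
theorem charpoly_add_of_mulVec_one_eq_smul {N : Matrix n n K} {s : K} (hN : N *ᵥ 1 = s • 1)
    (a : K) :
    (N + of fun _ _ => a).charpoly * (X - C s) =
      N.charpoly * (X - C (s + a * Fintype.card n)) := by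
  let φ := algebraMap K[X] (FractionRing K[X])
  have hφ : Function.Injective φ := IsFractionRing.injective K[X] (FractionRing K[X])
  have hφ0 {P : K[X]} (hP : P.Monic) : φ P ≠ 0 :=
    (map_ne_zero_iff φ hφ).mpr hP.ne_zero
  set B := (charmatrix N).map φ
  have hB1 : B *ᵥ 1 = φ (X - C s) • 1 := by
    have h : charmatrix N *ᵥ 1 = (X - C s) • 1 := by
      funext i
      have := congrArg C (congrFun hN i)
      rw [RingHom.map_mulVec] at this
      simpa [charmatrix, sub_mulVec] using this
    ext i
    simpa [h] using (RingHom.map_mulVec φ (charmatrix N) 1 i).symm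
  have hsplit : (charmatrix (N + of fun _ _ => a)).map φ = B + of fun _ _ => -φ (C a) := by
    ext i j
    by_cases h : i = j
    · subst h; simp [B]; ring
    · simp [B, charmatrix_apply_ne _ _ _ h]; ring
  apply hφ
  have hdetB : φ N.charpoly = B.det := by rw [charpoly, RingHom.map_det]; rfl
  rw [map_mul, map_mul, charpoly, RingHom.map_det, RingHom.mapMatrix_apply, hsplit,
    det_add_of_mulVec_one_eq_smul _ (hφ0 (monic_X_sub_C s)) hB1, ← hdetB]
  · congr 1
    simp
    ring
  · exact (hdetB ▸ hφ0 N.charpoly_monic).isUnit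

section RCLike

variable {𝕜 : Type*} [RCLike 𝕜]

theorem IsHermitian.roots_charpoly_smul_one_add_smul {A : Matrix n n 𝕜} (hA : A.IsHermitian)
    (b c : 𝕜) :
    (b • 1 + c • A).charpoly.roots = A.charpoly.roots.map fun x => b + c * x := by
  have hconj : b • 1 + c • A = Unitary.conjStarAlgAut 𝕜 _ hA.eigenvectorUnitary
      (diagonal fun i => b + c * hA.eigenvalues i) := by
    conv_lhs => rw [hA.spectral_theorem]
    rw [← map_one (Unitary.conjStarAlgAut 𝕜 _ hA.eigenvectorUnitary), ← map_smul, ← map_smul,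
      ← map_add]
    congr 1
    ext i j
    by_cases h : i = j <;> simp [h]
  rw [hconj, Unitary.conjStarAlgAut_apply, charpoly_mul_comm, ← Matrix.mul_assoc,
    Unitary.coe_star_mul_self, Matrix.one_mul, charpoly_diagonal,
    roots_prod _ _ (prod_ne_zero_iff.mpr fun i _ => X_sub_C_ne_zero _),
    hA.roots_charpoly_eq_eigenvalues, Multiset.map_map]
  simp only [roots_X_sub_C, Multiset.bind_singleton]
  rfl

end RCLike

end Matrix

theorem eccMatrix_eq_of_forall_ecc_eq {V : Type*} [Fintype V] {G : SimpleGraph V} {d : ℕ}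
    (h : ∀ v, ecc G v = d) :
    eccMatrix G = of fun u v => if G.dist u v = d then (d : ℝ) else 0 := by
  ext u v
  simp only [eccMatrix, of_apply, h, min_self]
  split_ifs with hd <;> simp [hd]

namespace SimpleGraph

open Polynomial

section Regular

variable {V : Type*} [Fintype V] {G : SimpleGraph V}

theorem IsRegularOfDegree.not_isUniversal {r : ℕ} (hreg : G.IsRegularOfDegree r) (hG : G ≠ ⊤)
    (v : V) : ¬G.IsUniversal v := by
  obtain ⟨u, hu⟩ : ∃ u, ¬G.IsUniversal u := by simpa [eq_top_iff_forall_isUniversal] using hG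
  rw [← degree_lt_card_sub_one] at hu ⊢
  rwa [hreg v, ← hreg u]

theorem IsRegularOfDegree.roots_charpoly_smul_compl_adjMatrix {r : ℕ}
    (hreg : G.IsRegularOfDegree r) {μ : Multiset ℝ}
    (hspec : (G.adjMatrix ℝ).charpoly.roots = (r : ℝ) ::ₘ μ) (c : ℝ) :
    (c • Gᶜ.adjMatrix ℝ).charpoly.roots =
      (c * ((Fintype.card V : ℝ) - r - 1)) ::ₘ μ.map fun x => -c * (x + 1) := by
  set N : Matrix V V ℝ := (-c) • 1 + (-c) • G.adjMatrix ℝ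
  have hsplit : c • Gᶜ.adjMatrix ℝ = N + of fun _ _ => c := by
    ext u v
    by_cases huv : u = v
    · subst huv; simp [N]
    · by_cases hadj : G.Adj u v <;> simp [N, huv, hadj]
  have hN : N *ᵥ 1 = (-c + -c * r) • 1 := by
    ext v
    simp [N, add_mulVec, smul_mulVec, neg_mulVec, adjMatrix_mulVec_apply, hreg v]
  have key := congrArg roots (charpoly_add_of_mulVec_one_eq_smul hN c)
  have hne (M : Matrix V V ℝ) (a : ℝ) : M.charpoly * (X - C a) ≠ 0 :=
    ((charpoly_monic M).mul (monic_X_sub_C a)).ne_zero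
  rw [← hsplit, roots_mul (hne _ _), roots_mul (hne _ _), roots_X_sub_C, roots_X_sub_C,
    (G.isHermitian_adjMatrix ℝ).roots_charpoly_smul_one_add_smul, hspec, add_comm,
    Multiset.singleton_add, Multiset.map_cons, Multiset.cons_add, Multiset.cons_inj_right,
    add_comm, Multiset.singleton_add] at key
  rw [key]
  congr 1
  · ring
  · exact Multiset.map_congr rfl fun x _ => by ring

end Regular

section Join

variable {V₁ V₂ : Type*} {G₁ : SimpleGraph V₁} {G₂ : SimpleGraph V₂}

@[simp]
theorem joinGraph_adj_inl_inl {a b : V₁} :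
    (joinGraph G₁ G₂).Adj (.inl a) (.inl b) ↔ G₁.Adj a b := by
  simp [joinGraph, G₁.adj_comm b a, and_iff_right_of_imp G₁.ne_of_adj]

@[simp]
theorem joinGraph_adj_inr_inr {a b : V₂} :
    (joinGraph G₁ G₂).Adj (.inr a) (.inr b) ↔ G₂.Adj a b := by
  simp [joinGraph, G₂.adj_comm b a, and_iff_right_of_imp G₂.ne_of_adj]

@[simp]
theorem joinGraph_adj_inl_inr (a : V₁) (b : V₂) : (joinGraph G₁ G₂).Adj (.inl a) (.inr b) := by
  simp [joinGraph]

@[simp]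
theorem joinGraph_adj_inr_inl (a : V₂) (b : V₁) : (joinGraph G₁ G₂).Adj (.inr a) (.inl b) :=
  (joinGraph_adj_inl_inr b a).symm

variable [Nonempty V₁] [Nonempty V₂]

theorem joinGraph_exists_walk_length_le_two (x y : V₁ ⊕ V₂) :
    ∃ w : (joinGraph G₁ G₂).Walk x y, w.length ≤ 2 := by
  obtain ⟨a⟩ := ‹Nonempty V₁›
  obtain ⟨b⟩ := ‹Nonempty V₂›
  rcases x with x | x <;> rcases y with y | y
  · exact ⟨.cons (joinGraph_adj_inl_inr x b) (.cons (joinGraph_adj_inr_inl b y) .nil), by simp⟩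
  · exact ⟨.cons (joinGraph_adj_inl_inr x y) .nil, by simp⟩
  · exact ⟨.cons (joinGraph_adj_inr_inl x y) .nil, by simp⟩
  · exact ⟨.cons (joinGraph_adj_inr_inl x a) (.cons (joinGraph_adj_inl_inr a y) .nil), by simp⟩

theorem joinGraph_dist_eq_two_iff {x y : V₁ ⊕ V₂} :
    (joinGraph G₁ G₂).dist x y = 2 ↔ x ≠ y ∧ ¬(joinGraph G₁ G₂).Adj x y := by
  obtain ⟨w, hw⟩ := joinGraph_exists_walk_length_le_two (G₁ := G₁) (G₂ := G₂) x y
  have := dist_le w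
  rw [ne_eq, ← Reachable.dist_eq_zero_iff ⟨w⟩, ← dist_eq_one_iff_adj]
  omega

theorem ecc_joinGraph [Fintype V₁] [Fintype V₂] (h₁ : ∀ v, ¬G₁.IsUniversal v)
    (h₂ : ∀ v, ¬G₂.IsUniversal v) (x : V₁ ⊕ V₂) :
    ecc (joinGraph G₁ G₂) x = 2 := by
  refine le_antisymm (Finset.sup_le fun y _ => ?_) ?_
  · obtain ⟨w, hw⟩ := joinGraph_exists_walk_length_le_two (G₁ := G₁) (G₂ := G₂) x y
    exact (dist_le w).trans hw
  · obtain ⟨y, hy⟩ : ∃ y, (joinGraph G₁ G₂).dist x y = 2 := by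
      simp only [joinGraph_dist_eq_two_iff]
      rcases x with x | x
      · obtain ⟨y, hxy, hadj⟩ : ∃ y, x ≠ y ∧ ¬G₁.Adj x y := by simpa [IsUniversal] using h₁ x
        exact ⟨.inl y, by simpa using hxy, by simpa using hadj⟩
      · obtain ⟨y, hxy, hadj⟩ : ∃ y, x ≠ y ∧ ¬G₂.Adj x y := by simpa [IsUniversal] using h₂ x
        exact ⟨.inr y, by simpa using hxy, by simpa using hadj⟩
    exact hy ▸ Finset.le_sup (f := (joinGraph G₁ G₂).dist x) (Finset.mem_univ y)

theorem eccMatrix_joinGraph [Fintype V₁] [Fintype V₂] (h₁ : ∀ v, ¬G₁.IsUniversal v)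
    (h₂ : ∀ v, ¬G₂.IsUniversal v) :
    eccMatrix (joinGraph G₁ G₂) =
      fromBlocks ((2 : ℝ) • G₁ᶜ.adjMatrix ℝ) 0 0 ((2 : ℝ) • G₂ᶜ.adjMatrix ℝ) := by
  rw [eccMatrix_eq_of_forall_ecc_eq (ecc_joinGraph h₁ h₂)]
  ext (x | x) (y | y) <;> simp [joinGraph_dist_eq_two_iff]

end Join

end SimpleGraph

theorem stmt1_general {V : Type*} [Fintype V] (G : SimpleGraph V) (p r : ℕ)
    (hp : Fintype.card V = p) (hreg : G.IsRegularOfDegree r)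
    (hnc : G ≠ ⊤) (μ : Multiset ℝ)
    (hspec : (G.adjMatrix ℝ).charpoly.roots = (r : ℝ) ::ₘ μ) :
    (eccMatrix (joinGraph G G)).charpoly.roots =
      (2 * ((p : ℝ) - r - 1)) ::ₘ (2 * ((p : ℝ) - r - 1)) ::ₘ
        (μ.map (fun x => -2 * (x + 1)) + μ.map (fun x => -2 * (x + 1))) := by
  obtain ⟨v, -⟩ := ne_top_iff_exists_not_adj.mp hnc
  have : Nonempty V := ⟨v⟩
  have hG := hreg.not_isUniversal hnc
  rw [eccMatrix_joinGraph hG hG, charpoly_fromBlocks_zero₂₁, ← sq, Polynomial.roots_pow,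
    hreg.roots_charpoly_smul_compl_adjMatrix hspec, hp, two_nsmul, Multiset.cons_add,
    Multiset.add_cons]

/-- For an `r`-regular non-complete connected graph `G` on `p` vertices with
adjacency spectrum `{r} ∪ μ`, the eccentricity spectrum of `G ∨ G` consists of
`2(p-r-1)` with multiplicity 2 and `-2(λ+1)` with multiplicity 2 for each `λ ∈ μ`. -/
theorem stmt1 {V : Type*} [Fintype V] (G : SimpleGraph V) (p r : ℕ)
    (hp : Fintype.card V = p) (hconn : G.Connected) (hreg : G.IsRegularOfDegree r)
    (hnc : G ≠ ⊤) (μ : Multiset ℝ)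
    (hspec : (G.adjMatrix ℝ).charpoly.roots = (r : ℝ) ::ₘ μ) :
    (eccMatrix (joinGraph G G)).charpoly.roots =
      (2 * ((p : ℝ) - r - 1)) ::ₘ (2 * ((p : ℝ) - r - 1)) ::ₘ
        (μ.map (fun x => -2 * (x + 1)) + μ.map (fun x => -2 * (x + 1))) :=
  stmt1_general G p r hp hreg hnc μ hspec
end

section
/- Let G₁ be r₁-regular with r₁ ≥ 2, having p₁ vertices and q₁ edges, and let G₂ be r₂-regular with p₂ vertices. Then 4 is an eigenvalue of the eccentricity matrix of the subdivision-vertex join G₁ ∨̇ G₂ with multiplicity at least q₁ − p₁. -/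
open SimpleGraph Matrix Finset

attribute [local instance] Fintype.ofFinite Classical.propDecidable

noncomputable section

/-!
Write `R` for the incidence matrix of `G₁` and `B` for the adjacency matrix of its line graph.
Every vector `Z` on the edges of `G₁` with `R Z = 0`, extended by zero to the other vertices,
is an eigenvector of the eccentricity matrix for `4`. Indeed, computing distances and
eccentricities in `G₁ ∨̇ G₂` gives the three blocks `3 (J - R)`, `4 (J - I - B)` and `2 J` of the
eccentricity matrix in the columns of the subdivision vertices. Since every column of `R` sums to
`2`, `J Z = 0`, and `Rᵀ R = 2 I + B` gives `B Z = -2 Z`. Rank–nullity bounds the dimension of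
`ker R` from below by `q₁ - p₁`.
-/

open Sum

namespace SimpleGraph

variable {V : Type*} {G : SimpleGraph V} {u v : V}

theorem Reachable.add_one_le_dist_of_forall_adj {k : ℕ} (hr : G.Reachable u v) (hne : u ≠ v)
    (h : ∀ x, G.Adj u x → k ≤ G.dist x v) : k + 1 ≤ G.dist u v := by
  obtain ⟨p, hp⟩ := hr.exists_walk_length_eq_dist
  cases p with
  | nil => exact absurd rfl hne
  | cons hadj q =>
    have := h _ hadj
    have := dist_le q
    rw [Walk.length_cons] at hp
    omega

end SimpleGraph

theorem Sym2.exists_mem_notMem_of_ne {α : Type*} {v : α} {e f : Sym2 α} (hf : ¬f.IsDiag)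
    (hne : e ≠ f) (hve : v ∈ e) (hvf : v ∈ f) : ∃ c ∈ f, c ∉ e := by
  refine ⟨Mem.other hvf, other_mem hvf, fun hc => hne ?_⟩
  have hvc : v ≠ Mem.other hvf := (other_ne hf hvf).symm
  rw [(mem_and_mem_iff hvc).mp ⟨hve, hc⟩, other_spec]

section Eccentricity

variable {V : Type*} [Fintype V] (G : SimpleGraph V) {u v : V} {k : ℕ}

theorem dist_le_ecc (u v : V) : G.dist u v ≤ ecc G u :=
  Finset.le_sup (mem_univ v)

theorem ecc_le_iff : ecc G u ≤ k ↔ ∀ v, G.dist u v ≤ k := by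
  simp [ecc]

theorem ecc_le_dist_add_ecc (hG : G.Connected) (u v : V) : ecc G u ≤ G.dist u v + ecc G v :=
  (ecc_le_iff G).mpr fun _ => hG.dist_triangle.trans (Nat.add_le_add_left (dist_le_ecc G _ _) _)

theorem eccMatrix_apply_self (v : V) : eccMatrix G v v = 0 := by
  simp [eccMatrix]

theorem eccMatrix_apply_of_ecc_le_of_le_dist (hu : ecc G u ≤ k) (hk : k ≤ G.dist u v) :
    eccMatrix G u v = k := by
  have huv := dist_le_ecc G u v
  have hvu := G.dist_comm ▸ dist_le_ecc G v u
  have hmin : G.dist u v = min (ecc G u) (ecc G v) := by omega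
  simp only [eccMatrix, if_pos hmin]
  exact_mod_cast le_antisymm (huv.trans hu) hk

theorem eccMatrix_apply_of_dist_lt (hu : G.dist u v < ecc G u) (hv : G.dist u v < ecc G v) :
    eccMatrix G u v = 0 := by
  simp only [eccMatrix, ite_eq_right_iff]
  omega

end Eccentricity

theorem lineG_adj {V : Type*} {G : SimpleGraph V} {e f : G.edgeSet} :
    (lineG G).Adj e f ↔ e ≠ f ∧ ∃ v, v ∈ (e : Sym2 V) ∧ v ∈ (f : Sym2 V) := by
  simp only [lineG, fromRel_adj, ne_eq, and_congr_right_iff]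
  exact fun _ => or_iff_left_of_imp fun ⟨v, hf, he⟩ => ⟨v, he, hf⟩

section Incidence

variable {V : Type*} [Fintype V] (G : SimpleGraph V)

theorem incMat_apply_eq_incMatrix (v : V) (e : G.edgeSet) :
    incMat G v e = G.incMatrix ℝ v e := by
  simp [incMat, incMatrix_apply', incidenceSet, e.2]

theorem sum_incMat_apply (e : G.edgeSet) : ∑ v, incMat G v e = 2 := by
  simp only [incMat_apply_eq_incMatrix]
  exact G.sum_incMatrix_apply_of_mem_edgeSet e.2

theorem transpose_incMat_mul_incMat_apply_of_ne {e f : G.edgeSet} (hne : e ≠ f) :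
    ((incMat G)ᵀ * incMat G) e f =
      if ∃ v, v ∈ (e : Sym2 V) ∧ v ∈ (f : Sym2 V) then 1 else 0 := by
  simp only [mul_apply, transpose_apply, incMat, ite_zero_mul_ite_zero, one_mul, sum_boole]
  split_ifs with hs
  · obtain ⟨v, hve, hvf⟩ := hs
    rw [Nat.cast_eq_one, card_eq_one]
    refine ⟨v, eq_singleton_iff_unique_mem.mpr ⟨by simp [hve, hvf], fun x hx => ?_⟩⟩
    by_contra hxv
    rw [mem_filter] at hx
    exact hne (Subtype.ext (((Sym2.mem_and_mem_iff hxv).mp ⟨hx.2.1, hve⟩).trans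
      ((Sym2.mem_and_mem_iff hxv).mp ⟨hx.2.2, hvf⟩).symm))
  · rw [Nat.cast_eq_zero, card_eq_zero, filter_eq_empty_iff]
    exact fun x _ hx => hs ⟨x, hx⟩

theorem transpose_incMat_mul_incMat_apply_self (e : G.edgeSet) :
    ((incMat G)ᵀ * incMat G) e e = 2 := by
  rw [← sum_incMat_apply G e]
  simp only [mul_apply, transpose_apply, incMat, ite_zero_mul_ite_zero, and_self, one_mul]

theorem transpose_incMat_mul_incMat : (incMat G)ᵀ * incMat G = 2 + (lineG G).adjMatrix ℝ := by
  ext e f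
  by_cases hef : e = f
  · subst hef
    simp [transpose_incMat_mul_incMat_apply_self, ofNat_apply]
  · simp [transpose_incMat_mul_incMat_apply_of_ne G hef, hef, lineG_adj, ofNat_apply]

variable {G} {Z : G.edgeSet → ℝ}

theorem sum_eq_zero_of_incMat_mulVec_eq_zero (hZ : incMat G *ᵥ Z = 0) : ∑ e, Z e = 0 := by
  have hcol : (1 : V → ℝ) ᵥ* incMat G = fun _ => 2 :=
    funext fun e => by simp [vecMul, dotProduct, sum_incMat_apply]
  have h := congrArg ((1 : V → ℝ) ⬝ᵥ ·) hZ
  simp only [dotProduct_mulVec, hcol, dotProduct_zero] at h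
  simpa [dotProduct, ← mul_sum] using h

theorem lineG_adjMatrix_mulVec_of_incMat_mulVec_eq_zero (hZ : incMat G *ᵥ Z = 0) :
    (lineG G).adjMatrix ℝ *ᵥ Z = -2 • Z := by
  have h := congrArg ((incMat G)ᵀ *ᵥ ·) hZ
  simp only [mulVec_mulVec, transpose_incMat_mul_incMat, add_mulVec, mulVec_zero,
    ofNat_mulVec] at h
  rw [neg_smul, eq_neg_iff_add_eq_zero, add_comm]
  exact_mod_cast h

end Incidence

theorem Jmat_mulVec {m n : Type*} [Fintype n] (Z : n → ℝ) :
    Jmat m n *ᵥ Z = fun _ => ∑ j, Z j := by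
  ext; simp [Jmat, mulVec, dotProduct]

theorem Matrix.mulVec_extend_zero {R m ι κ : Type*} [NonUnitalNonAssocSemiring R] [Fintype ι]
    [Fintype κ] (M : Matrix m ι R) {s : κ → ι} (hs : Function.Injective s) (Z : κ → R) :
    M *ᵥ Function.extend s Z 0 = M.submatrix id s *ᵥ Z := by
  ext i
  simp only [mulVec, dotProduct, submatrix_apply, id]
  symm
  calc ∑ k, M i (s k) * Z k = ∑ x ∈ univ.map ⟨s, hs⟩, M i x * Function.extend s Z 0 x := by
        simp [hs.extend_apply]
    _ = ∑ x, M i x * Function.extend s Z 0 x := sum_subset (subset_univ _) fun x _ hx => by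
        simp [Function.extend_apply' _ _ _ (by simpa using hx)]

theorem Matrix.card_sub_card_le_finrank_ker_mulVecLin {K m n : Type*} [Field K] [Fintype m]
    [Fintype n] (A : Matrix m n K) :
    Fintype.card n - Fintype.card m ≤ Module.finrank K (LinearMap.ker A.mulVecLin) := by
  have h := LinearMap.finrank_range_add_finrank_ker A.mulVecLin
  have := (LinearMap.range A.mulVecLin).finrank_le
  simp only [Module.finrank_fintype_fun_eq_card] at h this
  omega

theorem finrank_le_finrank_eigSpace_of_mulVec_extend {ι κ : Type*} [Fintype ι] [Fintype κ]
    {M : Matrix ι ι ℝ} {μ : ℝ} {s : κ → ι} (hs : Function.Injective s)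
    {W : Submodule ℝ (κ → ℝ)}
    (hW : ∀ Z ∈ W, M.submatrix id s *ᵥ Z = μ • Function.extend s Z 0) :
    Module.finrank ℝ W ≤ Module.finrank ℝ (eigSpace M μ) := by
  let f : W →ₗ[ℝ] eigSpace M μ :=
    ((Function.ExtendByZero.linearMap ℝ s).comp W.subtype).codRestrict _ fun Z => by
      rw [eigSpace, LinearMap.mem_ker]
      change M *ᵥ Function.extend s (Z : κ → ℝ) 0 - μ • Function.extend s (Z : κ → ℝ) 0 = 0
      rw [mulVec_extend_zero M hs, hW Z Z.2, sub_self]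
  refine LinearMap.finrank_le_finrank_of_injective (f := f) fun Z Z' h => ?_
  exact Subtype.ext (Function.extend_injective hs (0 : ι → ℝ) (congrArg Subtype.val h))

namespace subVertexJoin

/- In the names below, `vertex`, `edge` and `right` stand for the three kinds of vertices
`inl (inl u)`, `inl (inr e)` and `inr w` of `subVertexJoin G₁ G₂`. -/

variable {V₁ V₂ : Type*} {G₁ : SimpleGraph V₁} {G₂ : SimpleGraph V₂}

@[simp]
theorem adj_vertex_edge_iff {u : V₁} {e : G₁.edgeSet} :
    (subVertexJoin G₁ G₂).Adj (inl (inl u)) (inl (inr e)) ↔ u ∈ (e : Sym2 V₁) := by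
  simp [subVertexJoin]

@[simp]
theorem adj_edge_vertex_iff {u : V₁} {e : G₁.edgeSet} :
    (subVertexJoin G₁ G₂).Adj (inl (inr e)) (inl (inl u)) ↔ u ∈ (e : Sym2 V₁) := by
  simp [subVertexJoin]

@[simp]
theorem adj_vertex_right (u : V₁) (w : V₂) :
    (subVertexJoin G₁ G₂).Adj (inl (inl u)) (inr w) := by
  simp [subVertexJoin]

@[simp]
theorem adj_right_vertex (w : V₂) (u : V₁) :
    (subVertexJoin G₁ G₂).Adj (inr w) (inl (inl u)) := by
  simp [subVertexJoin]

theorem adj_edge_iff {e : G₁.edgeSet} {x : (V₁ ⊕ G₁.edgeSet) ⊕ V₂} :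
    (subVertexJoin G₁ G₂).Adj (inl (inr e)) x ↔ ∃ a ∈ (e : Sym2 V₁), x = inl (inl a) := by
  rcases x with (a | f) | w <;> simp [subVertexJoin]

theorem connected (h₂ : G₂.Connected) : (subVertexJoin G₁ G₂).Connected := by
  obtain ⟨w₀⟩ := h₂.nonempty
  let φ : G₂ →g subVertexJoin G₁ G₂ := ⟨inr, fun h => by simp [subVertexJoin, h, h.ne]⟩
  refine (connected_iff_exists_forall_reachable _).mpr ⟨inr w₀, ?_⟩
  rintro ((a | e) | w)
  · exact (adj_right_vertex w₀ a).reachable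
  · exact (adj_right_vertex w₀ _).reachable.trans
      (adj_vertex_edge_iff.mpr (Sym2.out_fst_mem (e : Sym2 V₁))).reachable
  · exact (h₂.preconnected w₀ w).map φ

theorem two_le_dist_vertex_vertex (h₂ : G₂.Connected) {u v : V₁} (huv : u ≠ v) :
    2 ≤ (subVertexJoin G₁ G₂).dist (inl (inl u)) (inl (inl v)) :=
  (connected h₂).one_lt_dist_of_ne_of_not_adj (by simpa using huv) (by simp [subVertexJoin])

theorem two_le_dist_edge_edge (h₂ : G₂.Connected) {e f : G₁.edgeSet} (hef : e ≠ f) :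
    2 ≤ (subVertexJoin G₁ G₂).dist (inl (inr e)) (inl (inr f)) :=
  (connected h₂).one_lt_dist_of_ne_of_not_adj (by simpa using hef) (by simp [subVertexJoin])

theorem two_le_dist_right_edge (h₂ : G₂.Connected) (w : V₂) (e : G₁.edgeSet) :
    2 ≤ (subVertexJoin G₁ G₂).dist (inr w) (inl (inr e)) :=
  (connected h₂).one_lt_dist_of_ne_of_not_adj (by simp) (by simp [subVertexJoin])

theorem three_le_dist_edge_vertex (h₂ : G₂.Connected) {e : G₁.edgeSet} {u : V₁}
    (hu : u ∉ (e : Sym2 V₁)) : 3 ≤ (subVertexJoin G₁ G₂).dist (inl (inr e)) (inl (inl u)) :=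
  ((connected h₂).preconnected _ _).add_one_le_dist_of_forall_adj (by simp) fun x hx => by
    obtain ⟨a, ha, rfl⟩ := adj_edge_iff.mp hx
    exact two_le_dist_vertex_vertex h₂ (ne_of_mem_of_not_mem ha hu)

theorem four_le_dist_edge_edge (h₂ : G₂.Connected) {e f : G₁.edgeSet}
    (hef : ∀ v ∈ (e : Sym2 V₁), v ∉ (f : Sym2 V₁)) :
    4 ≤ (subVertexJoin G₁ G₂).dist (inl (inr e)) (inl (inr f)) := by
  have hne : e ≠ f := by
    rintro rfl
    exact hef _ (Sym2.out_fst_mem _) (Sym2.out_fst_mem _)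
  refine ((connected h₂).preconnected _ _).add_one_le_dist_of_forall_adj (by simpa using hne)
    fun x hx => ?_
  obtain ⟨a, ha, rfl⟩ := adj_edge_iff.mp hx
  rw [dist_comm]
  exact three_le_dist_edge_vertex h₂ (hef a ha)

theorem dist_edge_edge_le_two {e f : G₁.edgeSet} {v : V₁} (hve : v ∈ (e : Sym2 V₁))
    (hvf : v ∈ (f : Sym2 V₁)) : (subVertexJoin G₁ G₂).dist (inl (inr e)) (inl (inr f)) ≤ 2 :=
  dist_le (.cons (adj_edge_vertex_iff.mpr hve) (.cons (adj_vertex_edge_iff.mpr hvf) .nil))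

variable [Fintype V₁] [Fintype V₂]

theorem ecc_right_le_two (a : V₁) (w : V₂) : ecc (subVertexJoin G₁ G₂) (inr w) ≤ 2 := by
  refine (ecc_le_iff _).mpr ?_
  rintro ((u | f) | w')
  · exact (dist_le (adj_right_vertex w u).toWalk).trans (by simp)
  · exact dist_le (.cons (adj_right_vertex w _)
      (.cons (adj_vertex_edge_iff.mpr (Sym2.out_fst_mem (f : Sym2 V₁))) .nil))
  · exact dist_le (.cons (adj_right_vertex w a) (.cons (adj_vertex_right a w') .nil))

theorem ecc_vertex_le_three (h₂ : G₂.Connected) (u : V₁) :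
    ecc (subVertexJoin G₁ G₂) (inl (inl u)) ≤ 3 := by
  obtain ⟨w⟩ := h₂.nonempty
  have := ecc_le_dist_add_ecc _ (connected (G₁ := G₁) h₂) (inl (inl u)) (inr w)
  rw [dist_eq_one_iff_adj.mpr (adj_vertex_right u w)] at this
  linarith [ecc_right_le_two (G₁ := G₁) (G₂ := G₂) u w]

theorem ecc_edge_le_four (h₂ : G₂.Connected) (e : G₁.edgeSet) :
    ecc (subVertexJoin G₁ G₂) (inl (inr e)) ≤ 4 := by
  obtain ⟨w⟩ := h₂.nonempty
  have hw := ecc_right_le_two (G₁ := G₁) (G₂ := G₂) (e : Sym2 V₁).out.1 w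
  have := ecc_le_dist_add_ecc _ (connected (G₁ := G₁) h₂) (inl (inr e)) (inr w)
  rw [dist_comm] at this
  linarith [dist_le_ecc (subVertexJoin G₁ G₂) (inr w) (inl (inr e))]

theorem three_le_ecc_edge (h₂ : G₂.Connected) {e : G₁.edgeSet} {u : V₁}
    (hu : u ∉ (e : Sym2 V₁)) : 3 ≤ ecc (subVertexJoin G₁ G₂) (inl (inr e)) :=
  (three_le_dist_edge_vertex h₂ hu).trans (dist_le_ecc _ _ _)

theorem eccMatrix_submatrix_vertex_edge (h₂ : G₂.Connected) :
    (eccMatrix (subVertexJoin G₁ G₂)).submatrix (inl ∘ inl) (inl ∘ inr) =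
      (3 : ℝ) • (Jmat V₁ G₁.edgeSet - incMat G₁) := by
  obtain ⟨w⟩ := h₂.nonempty
  ext u f
  simp only [submatrix_apply, Function.comp_apply, Matrix.smul_apply, Matrix.sub_apply, Jmat,
    of_apply, incMat, smul_eq_mul]
  by_cases hu : u ∈ (f : Sym2 V₁)
  · have hd : (subVertexJoin G₁ G₂).dist (inl (inl u)) (inl (inr f)) = 1 := by simpa using hu
    rw [if_pos hu, sub_self, mul_zero]
    apply eccMatrix_apply_of_dist_lt <;> rw [hd]
    · have hb := Sym2.other_ne (G₁.not_isDiag_of_mem_edgeSet f.2) hu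
      exact (two_le_dist_vertex_vertex h₂ hb.symm).trans (dist_le_ecc _ _ _)
    · exact (dist_comm ▸ two_le_dist_right_edge h₂ w f).trans (dist_le_ecc _ _ (inr w))
  · rw [if_neg hu, sub_zero, mul_one]
    exact_mod_cast eccMatrix_apply_of_ecc_le_of_le_dist _ (ecc_vertex_le_three h₂ u)
      (dist_comm ▸ three_le_dist_edge_vertex h₂ hu)

theorem eccMatrix_submatrix_right_edge (h₂ : G₂.Connected) :
    (eccMatrix (subVertexJoin G₁ G₂)).submatrix inr (inl ∘ inr) =
      (2 : ℝ) • Jmat V₂ G₁.edgeSet := by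
  ext w f
  simp only [submatrix_apply, Function.comp_apply, Matrix.smul_apply, Jmat, of_apply, smul_eq_mul,
    mul_one]
  exact_mod_cast eccMatrix_apply_of_ecc_le_of_le_dist _ (ecc_right_le_two (f : Sym2 V₁).out.1 w)
    (two_le_dist_right_edge h₂ w f)

theorem eccMatrix_submatrix_edge_edge (h₂ : G₂.Connected) :
    (eccMatrix (subVertexJoin G₁ G₂)).submatrix (inl ∘ inr) (inl ∘ inr) =
      (4 : ℝ) • (Jmat G₁.edgeSet G₁.edgeSet - 1 - (lineG G₁).adjMatrix ℝ) := by
  ext e f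
  simp only [submatrix_apply, Function.comp_apply, Matrix.smul_apply, Matrix.sub_apply, Jmat,
    of_apply, one_apply, adjMatrix_apply, lineG_adj, smul_eq_mul]
  by_cases hef : e = f
  · subst hef
    simp [eccMatrix_apply_self]
  by_cases hshare : ∃ v, v ∈ (e : Sym2 V₁) ∧ v ∈ (f : Sym2 V₁)
  · obtain ⟨v, hve, hvf⟩ := hshare
    rw [if_neg hef, if_pos ⟨hef, v, hve, hvf⟩, sub_zero, sub_self, mul_zero]
    have hd := le_antisymm (dist_edge_edge_le_two (G₂ := G₂) hve hvf)
      (two_le_dist_edge_edge h₂ hef)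
    apply eccMatrix_apply_of_dist_lt <;> rw [hd]
    · obtain ⟨c, -, hc⟩ := Sym2.exists_mem_notMem_of_ne (G₁.not_isDiag_of_mem_edgeSet f.2)
        (Subtype.coe_ne_coe.mpr hef) hve hvf
      exact three_le_ecc_edge h₂ hc
    · obtain ⟨c, -, hc⟩ := Sym2.exists_mem_notMem_of_ne (G₁.not_isDiag_of_mem_edgeSet e.2)
        (Subtype.coe_ne_coe.mpr (Ne.symm hef)) hvf hve
      exact three_le_ecc_edge h₂ hc
  · rw [if_neg hef, if_neg fun h => hshare h.2, sub_zero, sub_zero, mul_one]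
    push Not at hshare
    exact_mod_cast eccMatrix_apply_of_ecc_le_of_le_dist _ (ecc_edge_le_four h₂ e)
      (four_le_dist_edge_edge h₂ hshare)

theorem eccMatrix_submatrix_mulVec_of_incMat_mulVec_eq_zero (h₂ : G₂.Connected)
    {Z : G₁.edgeSet → ℝ} (hZ : incMat G₁ *ᵥ Z = 0) :
    (eccMatrix (subVertexJoin G₁ G₂)).submatrix id (inl ∘ inr) *ᵥ Z =
      (4 : ℝ) • Function.extend (inl ∘ inr) Z 0 := by
  have hsum := sum_eq_zero_of_incMat_mulVec_eq_zero hZ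
  have hs : Function.Injective (inl ∘ inr : G₁.edgeSet → (V₁ ⊕ G₁.edgeSet) ⊕ V₂) :=
    inl_injective.comp inr_injective
  ext ((u | e) | w)
  · change ((eccMatrix _).submatrix (inl ∘ inl) (inl ∘ inr) *ᵥ Z) u = _
    rw [eccMatrix_submatrix_vertex_edge h₂, smul_mulVec, sub_mulVec, Jmat_mulVec, hZ, hsum]
    simp [Function.extend_apply']
  · change ((eccMatrix _).submatrix (inl ∘ inr) (inl ∘ inr) *ᵥ Z) e =
      ((4 : ℝ) • Function.extend (inl ∘ inr) Z 0) ((inl ∘ inr) e)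
    rw [eccMatrix_submatrix_edge_edge h₂, smul_mulVec, sub_mulVec, sub_mulVec, Jmat_mulVec,
      one_mulVec, lineG_adjMatrix_mulVec_of_incMat_mulVec_eq_zero hZ, hsum]
    simp only [Pi.smul_apply, Pi.sub_apply, hs.extend_apply, smul_eq_mul]
    ring
  · change ((eccMatrix _).submatrix inr (inl ∘ inr) *ᵥ Z) w = _
    rw [eccMatrix_submatrix_right_edge h₂, smul_mulVec, Jmat_mulVec, hsum]
    simp [Function.extend_apply']

end subVertexJoin

theorem stmt7_general {V₁ V₂ : Type*} [Fintype V₁] [Fintype V₂]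
    (G₁ : SimpleGraph V₁) (G₂ : SimpleGraph V₂)
    (h₂ : G₂.Connected) :
    Fintype.card G₁.edgeSet - Fintype.card V₁ ≤
      Module.finrank ℝ (eigSpace (eccMatrix (subVertexJoin G₁ G₂)) 4) :=
  (card_sub_card_le_finrank_ker_mulVecLin (incMat G₁)).trans <|
    finrank_le_finrank_eigSpace_of_mulVec_extend (inl_injective.comp inr_injective) fun _ hZ =>
      subVertexJoin.eccMatrix_submatrix_mulVec_of_incMat_mulVec_eq_zero h₂ hZ

/-- For `r₁`-regular `G₁` (`r₁ ≥ 2`, `p₁` vertices, `q₁` edges) and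
`r₂`-regular `G₂`, `4` is an eigenvalue of `ε(G₁ ∨̇ G₂)` with multiplicity at least
`q₁ - p₁`. -/
theorem stmt7 {V₁ V₂ : Type*} [Fintype V₁] [Fintype V₂]
    (G₁ : SimpleGraph V₁) (G₂ : SimpleGraph V₂) (r₁ r₂ : ℕ)
    (h₁ : G₁.Connected) (h₂ : G₂.Connected)
    (hr₁ : G₁.IsRegularOfDegree r₁) (hr₁2 : 2 ≤ r₁)
    (hr₂ : G₂.IsRegularOfDegree r₂) :
    Fintype.card G₁.edgeSet - Fintype.card V₁ ≤
      Module.finrank ℝ (eigSpace (eccMatrix (subVertexJoin G₁ G₂)) 4) :=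
  stmt7_general G₁ G₂ h₂
end
end
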